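/- (Torsion-free Galilean case: reduced non-metricities, reduced identities, and distorsion decomposition.) Assume the duality relations hold on U, the connection is symmetric (T^α_{μν} = 0), and the spatial part of ω vanishes: h^{μα} h^{νβ} ω_{αβ} = 0 at every point. Define A_μ := ω_{μσ} v^σ, A^μ := h^{μσ} A_σ, and the Galilean reduced non-metricities 𝒬̂_{μν} := ∇_μ τ_ν + 2 τ_μ A_ν and 𝒬̂_α{}^{μν} := ∇_α h^{μν} − 2 τ_α (v^μ A^ν + v^ν A^μ). Then at every point of U: (i) 𝒬̂_{μν} = 𝒬̂_{νμ}; (ii) τ_ν 𝒬̂_α{}^{μν} + h^{μν} 𝒬̂_{αν} = 0; and (iii) Γ^α_{μν} − ^{v,τ}Γ^α_{μν} = L̂^α_{μν} + v^α (τ_μ ω_{νσ} v^σ + τ_ν ω_{μσ} v^σ) + (τ_μ κ_{νβ} + τ_ν κ_{μβ}) h^{αβ}, where L̂^α_{μν} := h^{αβ} γ_{βλ} · (1/2)(γ_{σν} 𝒬̂_μ{}^{σλ} + γ_{σμ} 𝒬̂_ν{}^{σλ}) − (1/2) h^{ακ} γ_{μσ} γ_{νλ} 𝒬̂_κ{}^{σλ}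 − (1/2) v^α (𝒬̂_{μν} + 𝒬̂_{νμ}) and κ_{μν} := (1/2)(γ_{να} ∇_μ v^α − γ_{μα} ∇_ν v^α). -/

import Mathlib

/-! Common setup: fields on an open subset `U` of `ℝ⁴`, coordinates indexed by `Fin 4`,
partial derivatives `pd`, covariant derivatives, torsion, the intrinsic objects
`ω`, `Θ`, the compatible connection `^{v,τ}Γ` and the Coriolis field. -/

abbrev Vec4 : Type := Fin 4 → ℝ
abbrev Tens1 : Type := Vec4 → Fin 4 → ℝ
abbrev Tens2 : Type := Vec4 → Fin 4 → Fin 4 → ℝ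
abbrev Tens3 : Type := Vec4 → Fin 4 → Fin 4 → Fin 4 → ℝ

/-- μ-th partial derivative -/
noncomputable def pd (μ : Fin 4) (f : Vec4 → ℝ) (x : Vec4) : ℝ :=
  fderiv ℝ f x (Pi.single μ 1)

/-- ∇_μ τ_ν := ∂_μ τ_ν − Γ^σ_{μν} τ_σ -/
noncomputable def covOne (Γ : Tens3) (τ : Tens1) (x : Vec4) (μ ν : Fin 4) : ℝ :=
  pd μ (fun y => τ y ν) x - ∑ σ, Γ x σ μ ν * τ x σ

/-- ∇_μ v^ν := ∂_μ v^ν + Γ^ν_{μσ} v^σ -/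
noncomputable def covVec (Γ : Tens3) (v : Tens1) (x : Vec4) (μ ν : Fin 4) : ℝ :=
  pd μ (fun y => v y ν) x + ∑ σ, Γ x ν μ σ * v x σ

/-- ∇_α γ_{μν} := ∂_α γ_{μν} − Γ^σ_{αμ} γ_{σν} − Γ^σ_{αν} γ_{μσ} -/
noncomputable def covLow (Γ : Tens3) (γ : Tens2) (x : Vec4) (α μ ν : Fin 4) : ℝ :=
  pd α (fun y => γ y μ ν) x - ∑ σ, Γ x σ α μ * γ x σ ν - ∑ σ, Γ x σ α ν * γ x μ σ

/-- ∇_α h^{μν} := ∂_α h^{μν} + Γ^μ_{ασ} h^{σν} + Γ^ν_{ασ} h^{μσ} -/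
noncomputable def covUp (Γ : Tens3) (h : Tens2) (x : Vec4) (α μ ν : Fin 4) : ℝ :=
  pd α (fun y => h y μ ν) x + ∑ σ, Γ x μ α σ * h x σ ν + ∑ σ, Γ x ν α σ * h x μ σ

/-- Torsion T^α_{μν} := Γ^α_{μν} − Γ^α_{νμ} -/
def torsion (Γ : Tens3) (x : Vec4) (α μ ν : Fin 4) : ℝ :=
  Γ x α μ ν - Γ x α ν μ

/-- ω_{μν} := (1/2)(∂_μ τ_ν − ∂_ν τ_μ) -/
noncomputable def omega2 (τ : Tens1) (x : Vec4) (μ ν : Fin 4) : ℝ :=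
  (1/2) * (pd μ (fun y => τ y ν) x - pd ν (fun y => τ y μ) x)

/-- Θ_{μν} := (1/2)(v^σ ∂_σ γ_{μν} + γ_{σν} ∂_μ v^σ + γ_{μσ} ∂_ν v^σ) -/
noncomputable def theta2 (v : Tens1) (γ : Tens2) (x : Vec4) (μ ν : Fin 4) : ℝ :=
  (1/2) * (∑ σ, v x σ * pd σ (fun y => γ y μ ν) x
    + ∑ σ, γ x σ ν * pd μ (fun y => v y σ) x
    + ∑ σ, γ x μ σ * pd ν (fun y => v y σ) x)

/-- The compatible connection ^{v,τ}Γ^α_{μν} -/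
noncomputable def compatConn (v τ : Tens1) (γ h : Tens2) : Tens3 := fun x α μ ν =>
  ∑ σ, h x α σ * ((1/2) * pd μ (fun y => γ y ν σ) x + (1/2) * pd ν (fun y => γ y μ σ) x
    - (1/2) * pd σ (fun y => γ y μ ν) x)
  + (1/2) * v x α * (pd μ (fun y => τ y ν) x + pd ν (fun y => τ y μ) x)

/-- Coriolis field κ_{μν} := (1/2)(γ_{να} ∇_μ v^α − γ_{μα} ∇_ν v^α) -/
noncomputable def coriolis (Γ : Tens3) (v : Tens1) (γ : Tens2) (x : Vec4) (μ ν : Fin 4) : ℝ :=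
  (1/2) * (∑ α, γ x ν α * covVec Γ v x μ α - ∑ α, γ x μ α * covVec Γ v x ν α)

/-- Smoothness of a rank-1 field on U -/
def Smooth1 (τ : Tens1) (U : Set Vec4) : Prop := ∀ ν, ContDiffOn ℝ (⊤ : ℕ∞) (fun x => τ x ν) U
/-- Smoothness of a rank-2 field on U -/
def Smooth2 (γ : Tens2) (U : Set Vec4) : Prop := ∀ μ ν, ContDiffOn ℝ (⊤ : ℕ∞) (fun x => γ x μ ν) U
/-- Smoothness of connection coefficients on U -/
def Smooth3 (Γ : Tens3) (U : Set Vec4) : Prop := ∀ α μ ν, ContDiffOn ℝ (⊤ : ℕ∞) (fun x => Γ x α μ ν) U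

/-- Kronecker delta -/
def kron (μ ν : Fin 4) : ℝ := if μ = ν then 1 else 0

/-- The duality relations: τ_μ v^μ = 1, h^{μν} τ_ν = 0, γ_{μν} v^ν = 0,
h^{μσ} γ_{σν} = δ^μ_ν − v^μ τ_ν, together with symmetry of γ and h. -/
def DualityOn (τ v : Tens1) (γ h : Tens2) (U : Set Vec4) : Prop :=
  ∀ x ∈ U, (∀ μ ν, γ x μ ν = γ x ν μ) ∧ (∀ μ ν, h x μ ν = h x ν μ) ∧
    (∑ μ, τ x μ * v x μ = 1) ∧
    (∀ μ, ∑ ν, h x μ ν * τ x ν = 0) ∧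
    (∀ μ, ∑ ν, γ x μ ν * v x ν = 0) ∧
    (∀ μ ν, ∑ σ, h x μ σ * γ x σ ν = kron μ ν - v x μ * τ x ν)

/-- A_μ := ω_{μσ} v^σ -/
noncomputable def Agal (τ v : Tens1) (x : Vec4) (μ : Fin 4) : ℝ :=
  ∑ σ, omega2 τ x μ σ * v x σ

/-- A^μ := h^{μσ} A_σ -/
noncomputable def AgalUp (τ v : Tens1) (h : Tens2) (x : Vec4) (μ : Fin 4) : ℝ :=
  ∑ σ, h x μ σ * Agal τ v x σ

/-- Galilean reduced non-metricity 𝒬̂_{μν} := ∇_μ τ_ν + 2 τ_μ A_ν -/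
noncomputable def galRedQLow (Γ : Tens3) (τ v : Tens1) (x : Vec4) (μ ν : Fin 4) : ℝ :=
  covOne Γ τ x μ ν + 2 * τ x μ * Agal τ v x ν

/-- Galilean reduced non-metricity 𝒬̂_α{}^{μν} := ∇_α h^{μν} − 2 τ_α (v^μ A^ν + v^ν A^μ) -/
noncomputable def galRedQUp (Γ : Tens3) (τ v : Tens1) (h : Tens2)
    (x : Vec4) (α μ ν : Fin 4) : ℝ :=
  covUp Γ h x α μ ν - 2 * τ x α * (v x μ * AgalUp τ v h x ν + v x ν * AgalUp τ v h x μ)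

/-- Galilean distorsion L̂^α_{μν} := h^α{}_β 𝒬̂_{(μν)}{}^β − (1/2) 𝒬̂^α{}_{μν} − v^α 𝒬̂_{(μν)},
with all index raising/lowering by `h` and `γ` written out. -/
noncomputable def galDistorsion (Γ : Tens3) (τ v : Tens1) (γ h : Tens2)
    (x : Vec4) (α μ ν : Fin 4) : ℝ :=
  (∑ β, ∑ l, h x α β * γ x β l *
      ((1/2) * ((∑ σ, γ x σ ν * galRedQUp Γ τ v h x μ σ l)
        + (∑ σ, γ x σ μ * galRedQUp Γ τ v h x ν σ l))))
  - (1/2) * ∑ κ, ∑ σ, ∑ l, h x α κ * γ x μ σ * γ x ν l * galRedQUp Γ τ v h x κ σ l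
  - (1/2) * v x α * (galRedQLow Γ τ v x μ ν + galRedQLow Γ τ v x ν μ)

section Toolbox

lemma sum_ext {f g : Fin 4 → ℝ} (h : ∀ a, f a = g a) : (∑ a, f a) = ∑ a, g a :=
  Finset.sum_congr rfl fun a _ => h a

lemma exch (f g : Fin 4 → ℝ) (K : Fin 4 → Fin 4 → ℝ) :
    (∑ m, (∑ a, f a * K a m) * g m) = ∑ a, f a * (∑ m, K a m * g m) := by
  simp only [Finset.sum_mul, Finset.mul_sum]
  rw [Finset.sum_comm]
  exact Finset.sum_congr rfl fun a _ => Finset.sum_congr rfl fun m _ => by ring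

lemma exch2 (f g : Fin 4 → ℝ) (K : Fin 4 → Fin 4 → ℝ) :
    (∑ m, f m * (∑ a, g a * K a m)) = ∑ a, g a * (∑ m, K a m * f m) := by
  simp only [Finset.mul_sum]
  rw [Finset.sum_comm]
  exact Finset.sum_congr rfl fun a _ => Finset.sum_congr rfl fun m _ => by ring

lemma col1 (F : Fin 4 → ℝ) (ρ : Fin 4) : (∑ m, kron m ρ * F m) = F ρ := by
  have e : ∀ m, kron m ρ * F m = if m = ρ then F m else 0 := fun m => by
    by_cases hm : m = ρ <;> simp [kron, hm]
  rw [sum_ext e]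
  simp

lemma col2 (F : Fin 4 → ℝ) (ρ : Fin 4) : (∑ m, kron ρ m * F m) = F ρ := by
  have e : ∀ m, kron ρ m * F m = if ρ = m then F m else 0 := fun m => by
    by_cases hm : ρ = m <;> simp [kron, hm]
  rw [sum_ext e]
  simp

end Toolbox
section PDHelpers

lemma pd_congr_on {U : Set Vec4} (hU : IsOpen U) {x : Vec4} (hx : x ∈ U)
    {f g : Vec4 → ℝ} (hfg : ∀ y ∈ U, f y = g y) (μ : Fin 4) : pd μ f x = pd μ g x := by
  unfold pd
  rw [Filter.EventuallyEq.fderiv_eq (Filter.eventuallyEq_of_mem (hU.mem_nhds hx) hfg)]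

lemma pd_const (μ : Fin 4) (c : ℝ) (x : Vec4) : pd μ (fun _ => c) x = 0 := by
  simp [pd]

lemma pd_mul {f g : Vec4 → ℝ} {x : Vec4} (hf : DifferentiableAt ℝ f x)
    (hg : DifferentiableAt ℝ g x) (μ : Fin 4) :
    pd μ (fun y => f y * g y) x = pd μ f x * g x + f x * pd μ g x := by
  unfold pd
  rw [fderiv_fun_mul hf hg]
  simp only [ContinuousLinearMap.add_apply, ContinuousLinearMap.coe_smul', Pi.smul_apply,
    smul_eq_mul]
  ring

lemma pd_sum {f : Fin 4 → Vec4 → ℝ} {x : Vec4} (hf : ∀ i, DifferentiableAt ℝ (f i) x)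
    (μ : Fin 4) :
    pd μ (fun y => ∑ i, f i y) x = ∑ i, pd μ (f i) x := by
  unfold pd
  rw [fderiv_fun_sum (fun i _ => hf i)]
  simp

lemma pd_sub {f g : Vec4 → ℝ} {x : Vec4} (hf : DifferentiableAt ℝ f x)
    (hg : DifferentiableAt ℝ g x) (μ : Fin 4) :
    pd μ (fun y => f y - g y) x = pd μ f x - pd μ g x := by
  unfold pd
  rw [fderiv_fun_sub hf hg]
  simp

end PDHelpers

section Abstract

noncomputable def tgome (pτ : Fin 4 → Fin 4 → ℝ) (a b : Fin 4) : ℝ := (1/2) * (pτ a b - pτ b a)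

noncomputable def tgA (v : Fin 4 → ℝ) (pτ : Fin 4 → Fin 4 → ℝ) (a : Fin 4) : ℝ :=
  ∑ σ, tgome pτ a σ * v σ

noncomputable def tgAup (v : Fin 4 → ℝ) (h : Fin 4 → Fin 4 → ℝ) (pτ : Fin 4 → Fin 4 → ℝ) (a : Fin 4) : ℝ :=
  ∑ σ, h a σ * tgA v pτ σ

noncomputable def tgQl (τ v : Fin 4 → ℝ) (Γ : Fin 4 → Fin 4 → Fin 4 → ℝ) (pτ : Fin 4 → Fin 4 → ℝ)
    (μ ν : Fin 4) : ℝ :=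
  pτ μ ν - ∑ σ, Γ σ μ ν * τ σ + 2 * τ μ * tgA v pτ ν

noncomputable def tgQu (τ v : Fin 4 → ℝ) (h : Fin 4 → Fin 4 → ℝ) (Γ : Fin 4 → Fin 4 → Fin 4 → ℝ)
    (pτ : Fin 4 → Fin 4 → ℝ) (ph : Fin 4 → Fin 4 → Fin 4 → ℝ) (α μ ν : Fin 4) : ℝ :=
  ph α μ ν + ∑ σ, Γ μ α σ * h σ ν + ∑ σ, Γ ν α σ * h μ σ
    - 2 * τ α * (v μ * tgAup v h pτ ν + v ν * tgAup v h pτ μ)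

noncomputable def tgCc (τ v : Fin 4 → ℝ) (h : Fin 4 → Fin 4 → ℝ) (pτ : Fin 4 → Fin 4 → ℝ)
    (pγ : Fin 4 → Fin 4 → Fin 4 → ℝ) (α μ ν : Fin 4) : ℝ :=
  ∑ σ, h α σ * ((1/2) * pγ μ ν σ + (1/2) * pγ ν μ σ - (1/2) * pγ σ μ ν)
    + (1/2) * v α * (pτ μ ν + pτ ν μ)

noncomputable def tgVv (v : Fin 4 → ℝ) (Γ : Fin 4 → Fin 4 → Fin 4 → ℝ) (pv : Fin 4 → Fin 4 → ℝ)
    (a b : Fin 4) : ℝ :=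
  pv a b + ∑ σ, Γ b a σ * v σ

noncomputable def tgkc (v : Fin 4 → ℝ) (γ : Fin 4 → Fin 4 → ℝ) (Γ : Fin 4 → Fin 4 → Fin 4 → ℝ)
    (pv : Fin 4 → Fin 4 → ℝ) (μ ν : Fin 4) : ℝ :=
  (1/2) * (∑ a, γ ν a * tgVv v Γ pv μ a - ∑ a, γ μ a * tgVv v Γ pv ν a)

noncomputable def tgL (τ v : Fin 4 → ℝ) (γ h : Fin 4 → Fin 4 → ℝ) (Γ : Fin 4 → Fin 4 → Fin 4 → ℝ)
    (pτ : Fin 4 → Fin 4 → ℝ) (ph : Fin 4 → Fin 4 → Fin 4 → ℝ) (α μ ν : Fin 4) : ℝ :=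
  (∑ β, ∑ l, h α β * γ β l *
      ((1/2) * ((∑ σ, γ σ ν * tgQu τ v h Γ pτ ph μ σ l)
        + (∑ σ, γ σ μ * tgQu τ v h Γ pτ ph ν σ l))))
  - (1/2) * ∑ k, ∑ σ, ∑ l, h α k * γ μ σ * γ ν l * tgQu τ v h Γ pτ ph k σ l
  - (1/2) * v α * (tgQl τ v Γ pτ μ ν + tgQl τ v Γ pτ ν μ)

noncomputable def tgN (γ : Fin 4 → Fin 4 → ℝ) (Γ : Fin 4 → Fin 4 → Fin 4 → ℝ)
    (pγ : Fin 4 → Fin 4 → Fin 4 → ℝ) (a μ ν : Fin 4) : ℝ :=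
  pγ a μ ν - ∑ σ, Γ σ a μ * γ σ ν - ∑ σ, Γ σ a ν * γ μ σ

noncomputable def tgW (v : Fin 4 → ℝ) (γ : Fin 4 → Fin 4 → ℝ)
    (Γ : Fin 4 → Fin 4 → Fin 4 → ℝ) (pv : Fin 4 → Fin 4 → ℝ) (a b : Fin 4) : ℝ :=
  ∑ k, γ b k * tgVv v Γ pv a k


noncomputable def tgX (τ v : Fin 4 → ℝ) (γ h : Fin 4 → Fin 4 → ℝ)
    (Γ : Fin 4 → Fin 4 → Fin 4 → ℝ) (pτ pv : Fin 4 → Fin 4 → ℝ)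
    (pγ ph : Fin 4 → Fin 4 → Fin 4 → ℝ) (α μ ν : Fin 4) : ℝ :=
  Γ α μ ν - tgCc τ v h pτ pγ α μ ν - tgL τ v γ h Γ pτ ph α μ ν
    - v α * (τ μ * tgA v pτ ν + τ ν * tgA v pτ μ)
    - ∑ β, (τ μ * tgkc v γ Γ pv ν β + τ ν * tgkc v γ Γ pv μ β) * h α β

theorem main_alg (τ v : Fin 4 → ℝ) (γ h : Fin 4 → Fin 4 → ℝ)
    (Γ : Fin 4 → Fin 4 → Fin 4 → ℝ) (pτ pv : Fin 4 → Fin 4 → ℝ)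
    (pγ ph : Fin 4 → Fin 4 → Fin 4 → ℝ)
    (hγs : ∀ μ ν, γ μ ν = γ ν μ) (hhs : ∀ μ ν, h μ ν = h ν μ)
    (hτv : ∑ μ, τ μ * v μ = 1)
    (hhτ : ∀ μ, ∑ ν, h μ ν * τ ν = 0)
    (hγv : ∀ μ, ∑ ν, γ μ ν * v ν = 0)
    (hhγ : ∀ μ ν, ∑ σ, h μ σ * γ σ ν = kron μ ν - v μ * τ ν)
    (hΓs : ∀ α μ ν, Γ α μ ν = Γ α ν μ)
    (hω : ∀ μ ν, ∑ a, ∑ b, h μ a * h ν b * tgome pτ a b = 0)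
    (hpγs : ∀ a μ ν, pγ a μ ν = pγ a ν μ)
    (hphs : ∀ a μ ν, ph a μ ν = ph a ν μ)
    (hD1 : ∀ a, ∑ μ, (pτ a μ * v μ + τ μ * pv a μ) = 0)
    (hD2 : ∀ a μ, ∑ ν, (ph a μ ν * τ ν + h μ ν * pτ a ν) = 0)
    (hD3 : ∀ a μ, ∑ ν, (pγ a μ ν * v ν + γ μ ν * pv a ν) = 0)
    (hD4 : ∀ a μ ν, ∑ σ, (ph a μ σ * γ σ ν + h μ σ * pγ a σ ν)
        = -(pv a μ * τ ν + v μ * pτ a ν)) :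
    (∀ μ ν, tgQl τ v Γ pτ μ ν = tgQl τ v Γ pτ ν μ) ∧
    (∀ α μ, (∑ ν, τ ν * tgQu τ v h Γ pτ ph α μ ν)
        + (∑ ν, h μ ν * tgQl τ v Γ pτ α ν) = 0) ∧
    (∀ α μ ν, Γ α μ ν - tgCc τ v h pτ pγ α μ ν
        = tgL τ v γ h Γ pτ ph α μ ν
          + v α * (τ μ * (∑ σ, tgome pτ ν σ * v σ) + τ ν * (∑ σ, tgome pτ μ σ * v σ))
          + ∑ β, (τ μ * tgkc v γ Γ pv ν β + τ ν * tgkc v γ Γ pv μ β) * h α β) := by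
  -- canonical contraction facts
  have c1s : ∀ m, (∑ a, τ a * h a m) = 0 := by
    intro m
    have e : ∀ a, τ a * h a m = h m a * τ a := fun a => by rw [hhs a m]; ring
    rw [sum_ext e]; exact hhτ m
  have c4s : ∀ m, (∑ a, v a * γ a m) = 0 := by
    intro m
    have e : ∀ a, v a * γ a m = γ m a * v a := fun a => by rw [hγs a m]; ring
    rw [sum_ext e]; exact hγv m
  have c6s : ∀ ρ m, (∑ a, γ ρ a * h a m) = kron m ρ - v m * τ ρ := by
    intro ρ m
    have e : ∀ a, γ ρ a * h a m = h m a * γ a ρ := fun a => by rw [hhs a m, hγs ρ a]; ring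
    rw [sum_ext e]; exact hhγ m ρ
  have CG : ∀ (F : Fin 4 → ℝ) (ρ : Fin 4),
      (∑ m, (∑ a, γ ρ a * h a m) * F m) = F ρ - τ ρ * ∑ m, v m * F m := by
    intro F ρ
    have e : ∀ m, (∑ a, γ ρ a * h a m) * F m = kron m ρ * F m - τ ρ * (v m * F m) :=
      fun m => by rw [c6s ρ m]; ring
    rw [sum_ext e, Finset.sum_sub_distrib, col1, ← Finset.mul_sum]
  -- basic facts about A
  have hvA : (∑ m, v m * tgA v pτ m) = 0 := by
    simp only [tgA, tgome, Fin.sum_univ_four]; ring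
  have hτAu : (∑ m, τ m * tgAup v h pτ m) = 0 := by
    have e := exch τ (tgA v pτ) h
    have z : ∀ m, (∑ a, τ a * h a m) * tgA v pτ m = 0 := fun m => by rw [c1s m, zero_mul]
    calc (∑ m, τ m * tgAup v h pτ m)
        = ∑ a, τ a * (∑ m, h a m * tgA v pτ m) := rfl
      _ = ∑ m, (∑ a, τ a * h a m) * tgA v pτ m := e.symm
      _ = ∑ _m, (0:ℝ) := sum_ext z
      _ = 0 := by simp
  have hγAu : ∀ ρ, (∑ m, γ ρ m * tgAup v h pτ m) = tgA v pτ ρ := by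
    intro ρ
    calc (∑ m, γ ρ m * tgAup v h pτ m)
        = ∑ a, γ ρ a * (∑ m, h a m * tgA v pτ m) := rfl
      _ = ∑ m, (∑ a, γ ρ a * h a m) * tgA v pτ m :=
          (exch (fun a => γ ρ a) (tgA v pτ) h).symm
      _ = tgA v pτ ρ - τ ρ * ∑ m, v m * tgA v pτ m := CG (tgA v pτ) ρ
      _ = tgA v pτ ρ := by rw [hvA]; ring
  -- spatial ω projection
  have hω' : ∀ p q, (∑ a, h p a * (∑ b, h q b * tgome pτ a b)) = 0 := by
    intro p q
    rw [← hω p q]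
    exact sum_ext fun a => by
      rw [Finset.mul_sum]; exact sum_ext fun b => by ring
  have E1 : ∀ q ρ, (∑ b, h q b * tgome pτ ρ b) = - (τ ρ * tgAup v h pτ q) := by
    intro q ρ
    have hA := CG (fun m => ∑ b, h q b * tgome pτ m b) ρ
    have hB := exch (fun a => γ ρ a) (fun m => ∑ b, h q b * tgome pτ m b) h
    have hC : (∑ a, γ ρ a * (∑ m, h a m * (∑ b, h q b * tgome pτ m b))) = 0 := by
      have z : ∀ a, γ ρ a * (∑ m, h a m * (∑ b, h q b * tgome pτ m b)) = 0 :=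
        fun a => by rw [hω' a q, mul_zero]
      rw [sum_ext z]; simp
    have hD : (∑ m, v m * (∑ b, h q b * tgome pτ m b)) = - tgAup v h pτ q := by
      simp only [tgAup, tgA, tgome, Fin.sum_univ_four]; ring
    rw [hB, hC] at hA
    rw [hD] at hA
    linarith [hA]
  have hS1 : ∀ ρ q, tgome pτ ρ q = τ q * tgA v pτ ρ - τ ρ * tgA v pτ q := by
    intro ρ q
    have hA := CG (fun m => tgome pτ ρ m) q
    have hB := exch (fun a => γ q a) (fun m => tgome pτ ρ m) h
    have hC : (∑ a, γ q a * (∑ m, h a m * tgome pτ ρ m)) = - (τ ρ * tgA v pτ q) := by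
      have z : ∀ a, γ q a * (∑ m, h a m * tgome pτ ρ m)
          = - τ ρ * (γ q a * tgAup v h pτ a) := fun a => by rw [E1 a ρ]; ring
      rw [sum_ext z]
      calc (∑ a, - τ ρ * (γ q a * tgAup v h pτ a))
          = - τ ρ * ∑ a, γ q a * tgAup v h pτ a := by rw [← Finset.mul_sum]
        _ = - (τ ρ * tgA v pτ q) := by rw [hγAu q]; ring
    have hD : (∑ m, v m * tgome pτ ρ m) = tgA v pτ ρ := by
      simp only [tgA, tgome, Fin.sum_univ_four]; ring
    rw [hB, hC, hD] at hA
    linarith [hA]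
  have homdef : ∀ a b, tgome pτ a b = (1/2) * (pτ a b - pτ b a) := fun _ _ => rfl
  -- Part (i)
  have partI : ∀ μ ν, tgQl τ v Γ pτ μ ν = tgQl τ v Γ pτ ν μ := by
    intro μ ν
    have hΓτ : (∑ σ, Γ σ μ ν * τ σ) = ∑ σ, Γ σ ν μ * τ σ :=
      sum_ext fun σ => by rw [hΓs σ μ ν]
    have h1 := hS1 μ ν
    rw [homdef] at h1
    simp only [tgQl]
    linarith [h1, hΓτ]
  -- Part (ii)
  have partII : ∀ a μ, (∑ n, τ n * tgQu τ v h Γ pτ ph a μ n)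
      + (∑ n, h μ n * tgQl τ v Γ pτ a n) = 0 := by
    intro a μ
    have e1 : ∀ n, τ n * tgQu τ v h Γ pτ ph a μ n
        = τ n * ph a μ n + τ n * (∑ σ, Γ μ a σ * h σ n) + τ n * (∑ σ, Γ n a σ * h μ σ)
          - (2 * τ a * v μ) * (τ n * tgAup v h pτ n)
          - (2 * τ a * tgAup v h pτ μ) * (τ n * v n) := fun n => by
      simp only [tgQu]; ring
    have e2 : ∀ n, h μ n * tgQl τ v Γ pτ a n
        = h μ n * pτ a n - h μ n * (∑ σ, Γ σ a n * τ σ)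
          + (2 * τ a) * (h μ n * tgA v pτ n) := fun n => by
      simp only [tgQl]; ring
    have hT2 : (∑ n, τ n * (∑ σ, Γ μ a σ * h σ n)) = 0 := by
      rw [exch2 τ (fun σ => Γ μ a σ) h]
      have z : ∀ σ, Γ μ a σ * (∑ m, h σ m * τ m) = 0 := fun σ => by rw [hhτ σ, mul_zero]
      rw [sum_ext z]; simp
    have hT3 : (∑ n, τ n * (∑ σ, Γ n a σ * h μ σ)) = ∑ n, h μ n * (∑ σ, Γ σ a n * τ σ) := by
      simp only [Finset.mul_sum]
      rw [Finset.sum_comm]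
      exact Finset.sum_congr rfl fun n _ => Finset.sum_congr rfl fun σ _ => by ring
    have hD2' : (∑ n, τ n * ph a μ n) + (∑ n, h μ n * pτ a n) = 0 := by
      have h0 := hD2 a μ
      rw [Finset.sum_add_distrib] at h0
      have e : (∑ n, ph a μ n * τ n) = ∑ n, τ n * ph a μ n := sum_ext fun n => by ring
      rw [e] at h0; exact h0
    have hAud : (∑ n, h μ n * tgA v pτ n) = tgAup v h pτ μ := rfl
    have d1 : (∑ n, τ n * tgQu τ v h Γ pτ ph a μ n)
        = (∑ n, τ n * ph a μ n) + 0 + (∑ n, h μ n * (∑ σ, Γ σ a n * τ σ))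
          - (2 * τ a * v μ) * 0 - (2 * τ a * tgAup v h pτ μ) * 1 := by
      rw [sum_ext e1, Finset.sum_sub_distrib, Finset.sum_sub_distrib,
        Finset.sum_add_distrib, Finset.sum_add_distrib, ← Finset.mul_sum, ← Finset.mul_sum,
        hT2, hT3, hτAu, hτv]
    have d2 : (∑ n, h μ n * tgQl τ v Γ pτ a n)
        = (∑ n, h μ n * pτ a n) - (∑ n, h μ n * (∑ σ, Γ σ a n * τ σ))
          + (2 * τ a) * tgAup v h pτ μ := by
      rw [sum_ext e2, Finset.sum_add_distrib, Finset.sum_sub_distrib, ← Finset.mul_sum, hAud]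
    rw [d1, d2]
    linarith [hD2']
  -- symmetry of N in last two slots
  have hNs : ∀ a b c, tgN γ Γ pγ a b c = tgN γ Γ pγ a c b := by
    intro a b c
    have e1 : (∑ σ, Γ σ a b * γ σ c) = ∑ σ, Γ σ a b * γ c σ :=
      sum_ext fun σ => by rw [hγs σ c]
    have e2 : (∑ σ, Γ σ a c * γ b σ) = ∑ σ, Γ σ a c * γ σ b :=
      sum_ext fun σ => by rw [hγs b σ]
    simp only [tgN]
    rw [hpγs a b c, e1, e2]
    ring
  -- symmetry of Qu in last two slots
  have hQus : ∀ c p q, tgQu τ v h Γ pτ ph c p q = tgQu τ v h Γ pτ ph c q p := by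
    intro c p q
    have e1 : (∑ σ, Γ p c σ * h σ q) = ∑ σ, Γ p c σ * h q σ :=
      sum_ext fun σ => by rw [hhs σ q]
    have e2 : (∑ σ, Γ q c σ * h p σ) = ∑ σ, Γ q c σ * h σ p :=
      sum_ext fun σ => by rw [hhs p σ]
    simp only [tgQu]
    rw [hphs c p q, e1, e2]
    ring
  -- v-contraction of N in the last slot
  have hS4 : ∀ a b, (∑ m, v m * tgN γ Γ pγ a b m) = - tgW v γ Γ pv a b := by
    intro a b
    have e : ∀ m, v m * tgN γ Γ pγ a b m
        = pγ a b m * v m - v m * (∑ σ, Γ σ a b * γ σ m) - v m * (∑ σ, Γ σ a m * γ b σ) :=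
      fun m => by simp only [tgN]; ring
    have h1 : (∑ m, v m * (∑ σ, Γ σ a b * γ σ m)) = 0 := by
      rw [exch2 v (fun σ => Γ σ a b) γ]
      have z : ∀ σ, Γ σ a b * (∑ m, γ σ m * v m) = 0 := fun σ => by rw [hγv σ, mul_zero]
      rw [sum_ext z]; simp
    have h2 : (∑ m, v m * (∑ σ, Γ σ a m * γ b σ)) = ∑ k, γ b k * (∑ m, Γ k a m * v m) := by
      simp only [Finset.mul_sum]
      rw [Finset.sum_comm]
      exact Finset.sum_congr rfl fun σ _ => Finset.sum_congr rfl fun m _ => by ring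
    have h3 : (∑ m, pγ a b m * v m) = - (∑ m, γ b m * pv a m) := by
      have h0 := hD3 a b
      rw [Finset.sum_add_distrib] at h0
      linarith [h0]
    have e2 : tgW v γ Γ pv a b
        = (∑ k, γ b k * pv a k) + (∑ k, γ b k * (∑ m, Γ k a m * v m)) := by
      have ee : ∀ k, γ b k * tgVv v Γ pv a k
          = γ b k * pv a k + γ b k * (∑ m, Γ k a m * v m) := fun k => by
        simp only [tgVv]; ring
      calc tgW v γ Γ pv a b = ∑ k, γ b k * tgVv v Γ pv a k := rfl
        _ = _ := by rw [sum_ext ee, Finset.sum_add_distrib]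
    rw [sum_ext e, Finset.sum_sub_distrib, Finset.sum_sub_distrib, h1, h2, h3, e2]
    ring
  -- v-contraction of W in the second slot
  have hWv : ∀ a, (∑ m, v m * tgW v γ Γ pv a m) = 0 := by
    intro a
    have e : ∀ m, v m * tgW v γ Γ pv a m
        = v m * (∑ k, tgVv v Γ pv a k * γ m k) := fun m => by
      rw [show tgW v γ Γ pv a m = ∑ k, tgVv v Γ pv a k * γ m k from
        sum_ext fun k => by ring]
    rw [sum_ext e, exch2 v (tgVv v Γ pv a) (fun k m => γ m k)]
    have z : ∀ k, tgVv v Γ pv a k * (∑ m, γ m k * v m) = 0 := fun k => by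
      rw [show (∑ m, γ m k * v m) = 0 from by
        rw [sum_ext (fun m => mul_comm (γ m k) (v m))]; exact c4s k, mul_zero]
    rw [sum_ext z]; simp
  -- contraction of Qu with γ on the last slot (covariant-constancy combination)
  have hS5a : ∀ a μ n, (∑ σ, tgQu τ v h Γ pτ ph a μ σ * γ σ n)
      + (∑ σ, h μ σ * tgN γ Γ pγ a σ n)
      = -(τ n * tgVv v Γ pv a μ) - v μ * (pτ a n - ∑ σ, Γ σ a n * τ σ)
        - 2 * τ a * v μ * tgA v pτ n := by
    intro a μ n
    have e1 : ∀ σ, tgQu τ v h Γ pτ ph a μ σ * γ σ n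
        = ph a μ σ * γ σ n + (∑ κ, Γ μ a κ * h κ σ) * γ σ n
          + (∑ κ, Γ σ a κ * h μ κ) * γ σ n
          - (2 * τ a * v μ) * (tgAup v h pτ σ * γ σ n)
          - (2 * τ a * tgAup v h pτ μ) * (v σ * γ σ n) := fun σ => by
      simp only [tgQu]; ring
    have e2 : ∀ σ, h μ σ * tgN γ Γ pγ a σ n
        = h μ σ * pγ a σ n - h μ σ * (∑ κ, Γ κ a σ * γ κ n)
          - h μ σ * (∑ κ, Γ κ a n * γ σ κ) := fun σ => by
      simp only [tgN]; ring
    have f1 : (∑ σ, ph a μ σ * γ σ n) + (∑ σ, h μ σ * pγ a σ n)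
        = -(pv a μ * τ n + v μ * pτ a n) := by
      have h0 := hD4 a μ n
      rw [Finset.sum_add_distrib] at h0
      exact h0
    have f2 : (∑ σ, (∑ κ, Γ μ a κ * h κ σ) * γ σ n)
        = Γ μ a n - τ n * (∑ κ, Γ μ a κ * v κ) := by
      rw [exch (fun κ => Γ μ a κ) (fun σ => γ σ n) h]
      have z : ∀ κ, Γ μ a κ * (∑ σ, h κ σ * γ σ n)
          = kron κ n * Γ μ a κ - (Γ μ a κ * v κ) * τ n := fun κ => by
        rw [hhγ κ n]; ring
      rw [sum_ext z, Finset.sum_sub_distrib, col1 (fun κ => Γ μ a κ) n, ← Finset.sum_mul]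
      ring
    have f3 : (∑ σ, (∑ κ, Γ σ a κ * h μ κ) * γ σ n)
        = ∑ σ, h μ σ * (∑ κ, Γ κ a σ * γ κ n) := by
      simp only [Finset.sum_mul, Finset.mul_sum]
      rw [Finset.sum_comm]
      exact Finset.sum_congr rfl fun κ _ => Finset.sum_congr rfl fun σ _ => by ring
    have f4 : (∑ σ, h μ σ * (∑ κ, Γ κ a n * γ σ κ))
        = Γ μ a n - v μ * (∑ κ, Γ κ a n * τ κ) := by
      rw [exch2 (fun σ => h μ σ) (fun κ => Γ κ a n) (fun κ σ => γ σ κ)]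
      have w : ∀ κ, (∑ σ, γ σ κ * h μ σ) = kron μ κ - v μ * τ κ := fun κ => by
        rw [sum_ext (fun σ => mul_comm (γ σ κ) (h μ σ))]; exact hhγ μ κ
      have z : ∀ κ, Γ κ a n * (∑ σ, γ σ κ * h μ σ)
          = kron κ μ * Γ κ a n - v μ * (Γ κ a n * τ κ) := fun κ => by
        rw [w κ, show kron μ κ = kron κ μ from by simp [kron, eq_comm]]; ring
      rw [sum_ext z, Finset.sum_sub_distrib, col1 (fun κ => Γ κ a n) μ, ← Finset.mul_sum]
    have f5 : (∑ σ, tgAup v h pτ σ * γ σ n) = tgA v pτ n := by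
      rw [sum_ext (fun σ => by rw [hγs σ n]; ring :
        ∀ σ, tgAup v h pτ σ * γ σ n = γ n σ * tgAup v h pτ σ)]
      exact hγAu n
    have f6 : (∑ σ, v σ * γ σ n) = 0 := c4s n
    have d1 : (∑ σ, tgQu τ v h Γ pτ ph a μ σ * γ σ n)
        = (∑ σ, ph a μ σ * γ σ n) + (Γ μ a n - τ n * (∑ κ, Γ μ a κ * v κ))
          + (∑ σ, h μ σ * (∑ κ, Γ κ a σ * γ κ n))
          - (2 * τ a * v μ) * tgA v pτ n - (2 * τ a * tgAup v h pτ μ) * 0 := by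
      rw [sum_ext e1, Finset.sum_sub_distrib, Finset.sum_sub_distrib,
        Finset.sum_add_distrib, Finset.sum_add_distrib, ← Finset.mul_sum, ← Finset.mul_sum,
        f2, f3, f5, f6]
    have d2 : (∑ σ, h μ σ * tgN γ Γ pγ a σ n)
        = (∑ σ, h μ σ * pγ a σ n) - (∑ σ, h μ σ * (∑ κ, Γ κ a σ * γ κ n))
          - (Γ μ a n - v μ * (∑ κ, Γ κ a n * τ κ)) := by
      rw [sum_ext e2, Finset.sum_sub_distrib, Finset.sum_sub_distrib, f4]
    rw [d1, d2, show tgVv v Γ pv a μ = pv a μ + ∑ κ, Γ μ a κ * v κ from rfl]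
    linarith [f1]
  -- double γ-contraction of Qu
  have hS5 : ∀ a ρ n, (∑ m, γ ρ m * (∑ σ, tgQu τ v h Γ pτ ph a m σ * γ σ n))
      = -(tgN γ Γ pγ a ρ n) - τ n * tgW v γ Γ pv a ρ - τ ρ * tgW v γ Γ pv a n := by
    intro a ρ n
    have inner : ∀ m, (∑ σ, tgQu τ v h Γ pτ ph a m σ * γ σ n)
        = -(τ n * tgVv v Γ pv a m) - v m * (pτ a n - ∑ σ, Γ σ a n * τ σ)
          - 2 * τ a * v m * tgA v pτ n - (∑ σ, h m σ * tgN γ Γ pγ a σ n) :=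
      fun m => by linarith [hS5a a m n]
    have e : ∀ m, γ ρ m * (∑ σ, tgQu τ v h Γ pτ ph a m σ * γ σ n)
        = -(τ n) * (γ ρ m * tgVv v Γ pv a m)
          - ((pτ a n - ∑ σ, Γ σ a n * τ σ) + 2 * τ a * tgA v pτ n) * (γ ρ m * v m)
          - γ ρ m * (∑ σ, h m σ * tgN γ Γ pγ a σ n) := fun m => by rw [inner m]; ring
    rw [sum_ext e, Finset.sum_sub_distrib, Finset.sum_sub_distrib,
      ← Finset.mul_sum, ← Finset.mul_sum]
    have p1 : (∑ m, γ ρ m * tgVv v Γ pv a m) = tgW v γ Γ pv a ρ := rfl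
    have p2 : (∑ m, γ ρ m * v m) = 0 := hγv ρ
    have p3 : (∑ m, γ ρ m * (∑ σ, h m σ * tgN γ Γ pγ a σ n))
        = tgN γ Γ pγ a ρ n + τ ρ * tgW v γ Γ pv a n := by
      have hS4v : (∑ σ, v σ * tgN γ Γ pγ a σ n) = - tgW v γ Γ pv a n := by
        rw [sum_ext (fun σ => by rw [hNs a σ n] :
          ∀ σ, v σ * tgN γ Γ pγ a σ n = v σ * tgN γ Γ pγ a n σ)]
        exact hS4 a n
      calc (∑ m, γ ρ m * (∑ σ, h m σ * tgN γ Γ pγ a σ n))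
          = ∑ σ, (∑ m, γ ρ m * h m σ) * tgN γ Γ pγ a σ n :=
            (exch (fun m => γ ρ m) (fun σ => tgN γ Γ pγ a σ n) h).symm
        _ = tgN γ Γ pγ a ρ n - τ ρ * (∑ σ, v σ * tgN γ Γ pγ a σ n) :=
            CG (fun σ => tgN γ Γ pγ a σ n) ρ
        _ = tgN γ Γ pγ a ρ n + τ ρ * tgW v γ Γ pv a n := by rw [hS4v]; ring
    rw [p1, p2, p3]
    ring
  -- the same with both contractions by γ written on the left
  have hContrA : ∀ c ρ q, (∑ b, γ ρ b * (∑ σ, γ σ q * tgQu τ v h Γ pτ ph c σ b))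
      = -(tgN γ Γ pγ c ρ q) - τ q * tgW v γ Γ pv c ρ - τ ρ * tgW v γ Γ pv c q := by
    intro c ρ q
    have e : ∀ b, γ ρ b * (∑ σ, γ σ q * tgQu τ v h Γ pτ ph c σ b)
        = γ ρ b * (∑ σ, tgQu τ v h Γ pτ ph c b σ * γ σ q) := fun b => by
      rw [sum_ext (fun σ => by rw [hQus c σ b]; ring :
        ∀ σ, γ σ q * tgQu τ v h Γ pτ ph c σ b = tgQu τ v h Γ pτ ph c b σ * γ σ q)]
    rw [sum_ext e]
    exact hS5 c ρ q
  -- key scalar identity S8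
  have hS8 : ∀ μ n, (1/2) * (tgW v γ Γ pv μ n + tgW v γ Γ pv n μ)
      + (1/2) * (∑ k, v k * tgN γ Γ pγ k μ n)
      + (∑ σ, v σ * ((1/2) * pγ μ n σ + (1/2) * pγ n μ σ - (1/2) * pγ σ μ n)) = 0 := by
    intro μ n
    have eW : ∀ p q, tgW v γ Γ pv p q
        = (∑ k, γ q k * pv p k) + (∑ k, γ q k * (∑ σ, Γ k p σ * v σ)) := by
      intro p q
      have ee : ∀ k, γ q k * tgVv v Γ pv p k
          = γ q k * pv p k + γ q k * (∑ σ, Γ k p σ * v σ) := fun k => by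
        simp only [tgVv]; ring
      calc tgW v γ Γ pv p q = ∑ k, γ q k * tgVv v Γ pv p k := rfl
        _ = _ := by rw [sum_ext ee, Finset.sum_add_distrib]
    have eN : (∑ k, v k * tgN γ Γ pγ k μ n)
        = (∑ k, v k * pγ k μ n) - (∑ k, v k * (∑ σ, Γ σ k μ * γ σ n))
          - (∑ k, v k * (∑ σ, Γ σ k n * γ μ σ)) := by
      rw [sum_ext (fun k => by simp only [tgN]; ring :
        ∀ k, v k * tgN γ Γ pγ k μ n
          = v k * pγ k μ n - v k * (∑ σ, Γ σ k μ * γ σ n) - v k * (∑ σ, Γ σ k n * γ μ σ)),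
        Finset.sum_sub_distrib, Finset.sum_sub_distrib]
    have eG : (∑ σ, v σ * ((1/2) * pγ μ n σ + (1/2) * pγ n μ σ - (1/2) * pγ σ μ n))
        = (1/2) * (∑ σ, v σ * pγ μ n σ) + (1/2) * (∑ σ, v σ * pγ n μ σ)
          - (1/2) * (∑ σ, v σ * pγ σ μ n) := by
      rw [sum_ext (fun σ => by ring :
        ∀ σ, v σ * ((1/2) * pγ μ n σ + (1/2) * pγ n μ σ - (1/2) * pγ σ μ n)
          = (1/2) * (v σ * pγ μ n σ) + (1/2) * (v σ * pγ n μ σ) - (1/2) * (v σ * pγ σ μ n)),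
        Finset.sum_sub_distrib, Finset.sum_add_distrib,
        ← Finset.mul_sum, ← Finset.mul_sum, ← Finset.mul_sum]
    have b1 : (∑ k, γ n k * (∑ σ, Γ k μ σ * v σ)) = ∑ k, v k * (∑ σ, Γ σ k μ * γ σ n) := by
      simp only [Finset.mul_sum]
      rw [Finset.sum_comm]
      exact Finset.sum_congr rfl fun o _ => Finset.sum_congr rfl fun i _ => by
        rw [hΓs i μ o, hγs n i]; ring
    have b2 : (∑ k, γ μ k * (∑ σ, Γ k n σ * v σ)) = ∑ k, v k * (∑ σ, Γ σ k n * γ μ σ) := by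
      simp only [Finset.mul_sum]
      rw [Finset.sum_comm]
      exact Finset.sum_congr rfl fun o _ => Finset.sum_congr rfl fun i _ => by
        rw [hΓs i n o]; ring
    have a1 : (∑ σ, v σ * pγ μ n σ) = - (∑ σ, γ n σ * pv μ σ) := by
      have h0 := hD3 μ n
      rw [Finset.sum_add_distrib] at h0
      have e : (∑ σ, pγ μ n σ * v σ) = ∑ σ, v σ * pγ μ n σ := sum_ext fun σ => by ring
      rw [e] at h0; linarith
    have a2 : (∑ σ, v σ * pγ n μ σ) = - (∑ σ, γ μ σ * pv n σ) := by
      have h0 := hD3 n μ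
      rw [Finset.sum_add_distrib] at h0
      have e : (∑ σ, pγ n μ σ * v σ) = ∑ σ, v σ * pγ n μ σ := sum_ext fun σ => by ring
      rw [e] at h0; linarith
    rw [eW μ n, eW n μ, eN, eG, b1, b2, a1, a2]
    ring
  -- Christoffel-type identity
  have hCh : ∀ l μ n, (∑ a, γ l a * Γ a μ n)
      = (1/2) * (pγ μ n l + pγ n μ l - pγ l μ n)
        - (1/2) * (tgN γ Γ pγ μ n l + tgN γ Γ pγ n μ l - tgN γ Γ pγ l μ n) := by
    intro l μ n
    have e0 : (∑ a, γ l a * Γ a μ n) = ∑ σ, Γ σ μ n * γ σ l :=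
      sum_ext fun a => by rw [hγs l a]; ring
    have e1 : (∑ σ, Γ σ μ l * γ n σ) = ∑ σ, Γ σ l μ * γ σ n :=
      sum_ext fun σ => by rw [hΓs σ μ l, hγs n σ]
    have e2 : (∑ σ, Γ σ n l * γ μ σ) = ∑ σ, Γ σ l n * γ μ σ :=
      sum_ext fun σ => by rw [hΓs σ n l]
    have e3 : (∑ σ, Γ σ n μ * γ σ l) = ∑ σ, Γ σ μ n * γ σ l :=
      sum_ext fun σ => by rw [hΓs σ n μ]
    simp only [tgN]
    rw [e0, e1, e2, e3]
    ring
  -- contraction of the compatible connection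
  have pieceC : ∀ l μ n, (∑ a, γ l a * tgCc τ v h pτ pγ a μ n)
      = ((1/2) * pγ μ n l + (1/2) * pγ n μ l - (1/2) * pγ l μ n)
        - τ l * (∑ σ, v σ * ((1/2) * pγ μ n σ + (1/2) * pγ n μ σ - (1/2) * pγ σ μ n)) := by
    intro l μ n
    have e : ∀ a, γ l a * tgCc τ v h pτ pγ a μ n
        = γ l a * (∑ σ, h a σ * ((1/2) * pγ μ n σ + (1/2) * pγ n μ σ - (1/2) * pγ σ μ n))
          + ((1/2) * (pτ μ n + pτ n μ)) * (γ l a * v a) := fun a => by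
      simp only [tgCc]; ring
    have t1 : (∑ a, γ l a * (∑ σ, h a σ * ((1/2) * pγ μ n σ + (1/2) * pγ n μ σ - (1/2) * pγ σ μ n)))
        = ((1/2) * pγ μ n l + (1/2) * pγ n μ l - (1/2) * pγ l μ n)
          - τ l * ∑ σ, v σ * ((1/2) * pγ μ n σ + (1/2) * pγ n μ σ - (1/2) * pγ σ μ n) := by
      calc (∑ a, γ l a * (∑ σ, h a σ * ((1/2) * pγ μ n σ + (1/2) * pγ n μ σ - (1/2) * pγ σ μ n)))
          = ∑ m, (∑ a, γ l a * h a m) * ((1/2) * pγ μ n m + (1/2) * pγ n μ m - (1/2) * pγ m μ n) :=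
            (exch (fun a => γ l a)
              (fun m => (1/2) * pγ μ n m + (1/2) * pγ n μ m - (1/2) * pγ m μ n) h).symm
        _ = _ := CG (fun m => (1/2) * pγ μ n m + (1/2) * pγ n μ m - (1/2) * pγ m μ n) l
    rw [sum_ext e, Finset.sum_add_distrib, ← Finset.mul_sum, t1, hγv l]
    ring
  -- contraction of the coriolis term
  have pieceK : ∀ l μ n,
      (∑ a, γ l a * (∑ b, (τ μ * tgkc v γ Γ pv n b + τ n * tgkc v γ Γ pv μ b) * h a b))
      = (τ μ * tgkc v γ Γ pv n l + τ n * tgkc v γ Γ pv μ l)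
        - τ l * (∑ b, v b * (τ μ * tgkc v γ Γ pv n b + τ n * tgkc v γ Γ pv μ b)) := by
    intro l μ n
    have e : ∀ a, γ l a * (∑ b, (τ μ * tgkc v γ Γ pv n b + τ n * tgkc v γ Γ pv μ b) * h a b)
        = γ l a * (∑ b, h a b * (τ μ * tgkc v γ Γ pv n b + τ n * tgkc v γ Γ pv μ b)) :=
      fun a => by rw [sum_ext (fun b => by ring :
        ∀ b, (τ μ * tgkc v γ Γ pv n b + τ n * tgkc v γ Γ pv μ b) * h a b
          = h a b * (τ μ * tgkc v γ Γ pv n b + τ n * tgkc v γ Γ pv μ b))]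
    rw [sum_ext e]
    calc (∑ a, γ l a * (∑ b, h a b * (τ μ * tgkc v γ Γ pv n b + τ n * tgkc v γ Γ pv μ b)))
        = ∑ m, (∑ a, γ l a * h a m) * (τ μ * tgkc v γ Γ pv n m + τ n * tgkc v γ Γ pv μ m) :=
          (exch (fun a => γ l a)
            (fun m => τ μ * tgkc v γ Γ pv n m + τ n * tgkc v γ Γ pv μ m) h).symm
      _ = _ := CG (fun m => τ μ * tgkc v γ Γ pv n m + τ n * tgkc v γ Γ pv μ m) l
  -- contraction of the v-term
  have pieceV : ∀ l μ n,
      (∑ a, γ l a * (v a * (τ μ * tgA v pτ n + τ n * tgA v pτ μ))) = 0 := by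
    intro l μ n
    have e : ∀ a, γ l a * (v a * (τ μ * tgA v pτ n + τ n * tgA v pτ μ))
        = (τ μ * tgA v pτ n + τ n * tgA v pτ μ) * (γ l a * v a) := fun a => by ring
    rw [sum_ext e, ← Finset.mul_sum, hγv l, mul_zero]
  -- contraction of the distorsion tensor
  have pieceL : ∀ l μ n, (∑ a, γ l a * tgL τ v γ h Γ pτ ph a μ n)
      = (1/2) * ((-(tgN γ Γ pγ μ l n) - τ n * tgW v γ Γ pv μ l - τ l * tgW v γ Γ pv μ n)
          + (-(tgN γ Γ pγ n l μ) - τ μ * tgW v γ Γ pv n l - τ l * tgW v γ Γ pv n μ))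
        - (1/2) * (-(tgN γ Γ pγ l n μ) - τ μ * tgW v γ Γ pv l n - τ n * tgW v γ Γ pv l μ)
        + (1/2) * τ l * (∑ m, v m * (-(tgN γ Γ pγ m n μ) - τ μ * tgW v γ Γ pv m n
            - τ n * tgW v γ Γ pv m μ)) := by
    intro l μ n
    have eT1 : ∀ a, (∑ β, ∑ b, h a β * γ β b *
        ((1/2) * ((∑ σ, γ σ n * tgQu τ v h Γ pτ ph μ σ b)
          + (∑ σ, γ σ μ * tgQu τ v h Γ pτ ph n σ b))))
        = ∑ β, h a β * (∑ b, γ β b *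
        ((1/2) * ((∑ σ, γ σ n * tgQu τ v h Γ pτ ph μ σ b)
          + (∑ σ, γ σ μ * tgQu τ v h Γ pτ ph n σ b)))) :=
      fun a => sum_ext fun β => by
        rw [Finset.mul_sum]
        exact sum_ext fun b => by ring
    have eT2 : ∀ a, (∑ k, ∑ σ, ∑ b, h a k * γ μ σ * γ n b * tgQu τ v h Γ pτ ph k σ b)
        = ∑ k, h a k * (∑ σ, γ μ σ * (∑ b, γ n b * tgQu τ v h Γ pτ ph k σ b)) :=
      fun a => sum_ext fun k => by
        rw [show (∑ σ, ∑ b, h a k * γ μ σ * γ n b * tgQu τ v h Γ pτ ph k σ b)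
            = ∑ σ, h a k * (γ μ σ * (∑ b, γ n b * tgQu τ v h Γ pτ ph k σ b)) from
          sum_ext fun σ => by
            rw [Finset.mul_sum, Finset.mul_sum]
            exact sum_ext fun b => by ring]
        rw [← Finset.mul_sum]
    have eL : ∀ a, γ l a * tgL τ v γ h Γ pτ ph a μ n
        = γ l a * (∑ β, h a β * (∑ b, γ β b *
            ((1/2) * ((∑ σ, γ σ n * tgQu τ v h Γ pτ ph μ σ b)
              + (∑ σ, γ σ μ * tgQu τ v h Γ pτ ph n σ b)))))
          - (1/2) * (γ l a * (∑ k, h a k * (∑ σ, γ μ σ *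
              (∑ b, γ n b * tgQu τ v h Γ pτ ph k σ b))))
          - ((1/2) * (tgQl τ v Γ pτ μ n + tgQl τ v Γ pτ n μ)) * (γ l a * v a) := fun a => by
      simp only [tgL]
      rw [eT1 a, eT2 a]
      ring
    rw [sum_ext eL, Finset.sum_sub_distrib, Finset.sum_sub_distrib,
      ← Finset.mul_sum, ← Finset.mul_sum]
    have hP1 : (∑ a, γ l a * (∑ β, h a β * (∑ b, γ β b *
        ((1/2) * ((∑ σ, γ σ n * tgQu τ v h Γ pτ ph μ σ b)
          + (∑ σ, γ σ μ * tgQu τ v h Γ pτ ph n σ b))))))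
        = (∑ b, γ l b * ((1/2) * ((∑ σ, γ σ n * tgQu τ v h Γ pτ ph μ σ b)
            + (∑ σ, γ σ μ * tgQu τ v h Γ pτ ph n σ b))))
          - τ l * ∑ m, v m * (∑ b, γ m b * ((1/2) * ((∑ σ, γ σ n * tgQu τ v h Γ pτ ph μ σ b)
            + (∑ σ, γ σ μ * tgQu τ v h Γ pτ ph n σ b)))) := by
      calc (∑ a, γ l a * (∑ β, h a β * (∑ b, γ β b *
          ((1/2) * ((∑ σ, γ σ n * tgQu τ v h Γ pτ ph μ σ b)
            + (∑ σ, γ σ μ * tgQu τ v h Γ pτ ph n σ b))))))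
          = ∑ m, (∑ a, γ l a * h a m) * (∑ b, γ m b *
            ((1/2) * ((∑ σ, γ σ n * tgQu τ v h Γ pτ ph μ σ b)
              + (∑ σ, γ σ μ * tgQu τ v h Γ pτ ph n σ b)))) :=
            (exch (fun a => γ l a) (fun m => ∑ b, γ m b *
              ((1/2) * ((∑ σ, γ σ n * tgQu τ v h Γ pτ ph μ σ b)
                + (∑ σ, γ σ μ * tgQu τ v h Γ pτ ph n σ b)))) h).symm
        _ = _ := CG _ l
    have hP1v : (∑ m, v m * (∑ b, γ m b * ((1/2) * ((∑ σ, γ σ n * tgQu τ v h Γ pτ ph μ σ b)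
        + (∑ σ, γ σ μ * tgQu τ v h Γ pτ ph n σ b))))) = 0 := by
      have e : ∀ m, v m * (∑ b, γ m b * ((1/2) * ((∑ σ, γ σ n * tgQu τ v h Γ pτ ph μ σ b)
          + (∑ σ, γ σ μ * tgQu τ v h Γ pτ ph n σ b))))
          = v m * (∑ b, ((1/2) * ((∑ σ, γ σ n * tgQu τ v h Γ pτ ph μ σ b)
            + (∑ σ, γ σ μ * tgQu τ v h Γ pτ ph n σ b))) * γ m b) := fun m => by
        rw [sum_ext (fun b => mul_comm (γ m b) _)]
      rw [sum_ext e, exch2 v (fun b => (1/2) * ((∑ σ, γ σ n * tgQu τ v h Γ pτ ph μ σ b)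
        + (∑ σ, γ σ μ * tgQu τ v h Γ pτ ph n σ b))) (fun b m => γ m b)]
      have z : ∀ b, ((1/2) * ((∑ σ, γ σ n * tgQu τ v h Γ pτ ph μ σ b)
          + (∑ σ, γ σ μ * tgQu τ v h Γ pτ ph n σ b))) * (∑ m, γ m b * v m) = 0 := fun b => by
        rw [show (∑ m, γ m b * v m) = 0 from by
          rw [sum_ext (fun m => mul_comm (γ m b) (v m))]; exact c4s b, mul_zero]
      rw [sum_ext z]; simp
    have hP1b : (∑ b, γ l b * ((1/2) * ((∑ σ, γ σ n * tgQu τ v h Γ pτ ph μ σ b)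
        + (∑ σ, γ σ μ * tgQu τ v h Γ pτ ph n σ b))))
        = (1/2) * ((-(tgN γ Γ pγ μ l n) - τ n * tgW v γ Γ pv μ l - τ l * tgW v γ Γ pv μ n)
          + (-(tgN γ Γ pγ n l μ) - τ μ * tgW v γ Γ pv n l - τ l * tgW v γ Γ pv n μ)) := by
      have e : ∀ b, γ l b * ((1/2) * ((∑ σ, γ σ n * tgQu τ v h Γ pτ ph μ σ b)
          + (∑ σ, γ σ μ * tgQu τ v h Γ pτ ph n σ b)))
          = (1/2) * (γ l b * (∑ σ, γ σ n * tgQu τ v h Γ pτ ph μ σ b))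
            + (1/2) * (γ l b * (∑ σ, γ σ μ * tgQu τ v h Γ pτ ph n σ b)) := fun b => by ring
      rw [sum_ext e, Finset.sum_add_distrib, ← Finset.mul_sum, ← Finset.mul_sum,
        hContrA μ l n, hContrA n l μ]
      ring
    have hFc : ∀ c, (∑ σ, γ μ σ * (∑ b, γ n b * tgQu τ v h Γ pτ ph c σ b))
        = -(tgN γ Γ pγ c n μ) - τ μ * tgW v γ Γ pv c n - τ n * tgW v γ Γ pv c μ := by
      intro c
      rw [← hContrA c n μ]
      simp only [Finset.mul_sum]
      rw [Finset.sum_comm]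
      exact Finset.sum_congr rfl fun b _ => Finset.sum_congr rfl fun σ _ => by
        rw [hγs μ σ]; ring
    have hP2 : (∑ a, γ l a * (∑ k, h a k * (∑ σ, γ μ σ *
        (∑ b, γ n b * tgQu τ v h Γ pτ ph k σ b))))
        = (∑ σ, γ μ σ * (∑ b, γ n b * tgQu τ v h Γ pτ ph l σ b))
          - τ l * ∑ m, v m * (∑ σ, γ μ σ * (∑ b, γ n b * tgQu τ v h Γ pτ ph m σ b)) := by
      calc (∑ a, γ l a * (∑ k, h a k * (∑ σ, γ μ σ *
          (∑ b, γ n b * tgQu τ v h Γ pτ ph k σ b))))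
          = ∑ m, (∑ a, γ l a * h a m) * (∑ σ, γ μ σ *
            (∑ b, γ n b * tgQu τ v h Γ pτ ph m σ b)) :=
            (exch (fun a => γ l a) (fun m => ∑ σ, γ μ σ *
              (∑ b, γ n b * tgQu τ v h Γ pτ ph m σ b)) h).symm
        _ = _ := CG _ l
    have hP2v : (∑ m, v m * (∑ σ, γ μ σ * (∑ b, γ n b * tgQu τ v h Γ pτ ph m σ b)))
        = ∑ m, v m * (-(tgN γ Γ pγ m n μ) - τ μ * tgW v γ Γ pv m n
          - τ n * tgW v γ Γ pv m μ) :=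
      sum_ext fun m => by rw [hFc m]
    rw [hP1, hP1v, hP1b, hP2, hP2v, hFc l, hγv l]
    ring
  -- spatial projection of the distorsion equation
  have P2 : ∀ l μ n, (∑ a, γ l a * tgX τ v γ h Γ pτ pv pγ ph a μ n) = 0 := by
    intro l μ n
    have e : ∀ a, γ l a * tgX τ v γ h Γ pτ pv pγ ph a μ n
        = γ l a * Γ a μ n - γ l a * tgCc τ v h pτ pγ a μ n
          - γ l a * tgL τ v γ h Γ pτ ph a μ n
          - γ l a * (v a * (τ μ * tgA v pτ n + τ n * tgA v pτ μ))
          - γ l a * (∑ b, (τ μ * tgkc v γ Γ pv n b + τ n * tgkc v γ Γ pv μ b) * h a b) :=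
      fun a => by simp only [tgX]; ring
    rw [sum_ext e, Finset.sum_sub_distrib, Finset.sum_sub_distrib, Finset.sum_sub_distrib,
      Finset.sum_sub_distrib, hCh l μ n, pieceC l μ n, pieceL l μ n, pieceV l μ n,
      pieceK l μ n]
    have r4 : (∑ m, v m * (-(tgN γ Γ pγ m n μ) - τ μ * tgW v γ Γ pv m n
        - τ n * tgW v γ Γ pv m μ))
        = (-1) * (∑ m, v m * tgN γ Γ pγ m μ n) - τ μ * (∑ m, v m * tgW v γ Γ pv m n)
          - τ n * (∑ m, v m * tgW v γ Γ pv m μ) := by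
      have e2 : ∀ m, v m * (-(tgN γ Γ pγ m n μ) - τ μ * tgW v γ Γ pv m n
          - τ n * tgW v γ Γ pv m μ)
          = (-1) * (v m * tgN γ Γ pγ m μ n) - τ μ * (v m * tgW v γ Γ pv m n)
            - τ n * (v m * tgW v γ Γ pv m μ) := fun m => by rw [hNs m n μ]; ring
      rw [sum_ext e2, Finset.sum_sub_distrib, Finset.sum_sub_distrib, ← Finset.mul_sum,
        ← Finset.mul_sum, ← Finset.mul_sum]
    have rK : (∑ b, v b * (τ μ * tgkc v γ Γ pv n b + τ n * tgkc v γ Γ pv μ b))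
        = τ μ * (∑ b, v b * tgkc v γ Γ pv n b) + τ n * (∑ b, v b * tgkc v γ Γ pv μ b) := by
      rw [sum_ext (fun b => by ring :
        ∀ b, v b * (τ μ * tgkc v γ Γ pv n b + τ n * tgkc v γ Γ pv μ b)
          = τ μ * (v b * tgkc v γ Γ pv n b) + τ n * (v b * tgkc v γ Γ pv μ b)),
        Finset.sum_add_distrib, ← Finset.mul_sum, ← Finset.mul_sum]
    have hvkc : ∀ q, (∑ b, v b * tgkc v γ Γ pv q b)
        = -(1/2) * (∑ b, v b * tgW v γ Γ pv b q) := by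
      intro q
      have e2 : ∀ b, v b * tgkc v γ Γ pv q b
          = (1/2) * (v b * tgW v γ Γ pv q b) - (1/2) * (v b * tgW v γ Γ pv b q) := fun b => by
        rw [show tgkc v γ Γ pv q b = (1/2) * (tgW v γ Γ pv q b - tgW v γ Γ pv b q) from rfl]
        ring
      rw [sum_ext e2, Finset.sum_sub_distrib, ← Finset.mul_sum, ← Finset.mul_sum, hWv q]
      ring
    have ekc1 : tgkc v γ Γ pv n l = (1/2) * (tgW v γ Γ pv n l - tgW v γ Γ pv l n) := rfl
    have ekc2 : tgkc v γ Γ pv μ l = (1/2) * (tgW v γ Γ pv μ l - tgW v γ Γ pv l μ) := rfl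
    rw [r4, rK, hvkc n, hvkc μ]
    linear_combination τ l * hS8 μ n - (1/2) * hNs μ n l - (1/2) * hNs n μ l
      + (1/2) * hNs l μ n - τ μ * ekc1 - τ n * ekc2
  -- temporal projection of the distorsion equation
  have P1 : ∀ μ n, (∑ a, τ a * tgX τ v γ h Γ pτ pv pγ ph a μ n) = 0 := by
    intro μ n
    have eT1 : ∀ a, (∑ β, ∑ b, h a β * γ β b *
        ((1/2) * ((∑ σ, γ σ n * tgQu τ v h Γ pτ ph μ σ b)
          + (∑ σ, γ σ μ * tgQu τ v h Γ pτ ph n σ b))))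
        = ∑ β, h a β * (∑ b, γ β b *
        ((1/2) * ((∑ σ, γ σ n * tgQu τ v h Γ pτ ph μ σ b)
          + (∑ σ, γ σ μ * tgQu τ v h Γ pτ ph n σ b)))) :=
      fun a => sum_ext fun β => by
        rw [Finset.mul_sum]
        exact sum_ext fun b => by ring
    have eT2 : ∀ a, (∑ k, ∑ σ, ∑ b, h a k * γ μ σ * γ n b * tgQu τ v h Γ pτ ph k σ b)
        = ∑ k, h a k * (∑ σ, γ μ σ * (∑ b, γ n b * tgQu τ v h Γ pτ ph k σ b)) :=
      fun a => sum_ext fun k => by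
        rw [show (∑ σ, ∑ b, h a k * γ μ σ * γ n b * tgQu τ v h Γ pτ ph k σ b)
            = ∑ σ, h a k * (γ μ σ * (∑ b, γ n b * tgQu τ v h Γ pτ ph k σ b)) from
          sum_ext fun σ => by
            rw [Finset.mul_sum, Finset.mul_sum]
            exact sum_ext fun b => by ring]
        rw [← Finset.mul_sum]
    have pC : (∑ a, τ a * tgCc τ v h pτ pγ a μ n) = (1/2) * (pτ μ n + pτ n μ) := by
      have e2 : ∀ a, τ a * tgCc τ v h pτ pγ a μ n
          = τ a * (∑ σ, h a σ * ((1/2) * pγ μ n σ + (1/2) * pγ n μ σ - (1/2) * pγ σ μ n))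
            + ((1/2) * (pτ μ n + pτ n μ)) * (τ a * v a) := fun a => by
        simp only [tgCc]; ring
      have z1 : (∑ a, τ a * (∑ σ, h a σ *
          ((1/2) * pγ μ n σ + (1/2) * pγ n μ σ - (1/2) * pγ σ μ n))) = 0 := by
        rw [← exch τ (fun m => (1/2) * pγ μ n m + (1/2) * pγ n μ m - (1/2) * pγ m μ n) h]
        have z : ∀ m, (∑ a, τ a * h a m) *
            ((1/2) * pγ μ n m + (1/2) * pγ n μ m - (1/2) * pγ m μ n) = 0 :=
          fun m => by rw [c1s m, zero_mul]
        rw [sum_ext z]; simp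
      rw [sum_ext e2, Finset.sum_add_distrib, z1, ← Finset.mul_sum, hτv]
      ring
    have pL : (∑ a, τ a * tgL τ v γ h Γ pτ ph a μ n)
        = -(1/2) * (tgQl τ v Γ pτ μ n + tgQl τ v Γ pτ n μ) := by
      have eL2 : ∀ a, τ a * tgL τ v γ h Γ pτ ph a μ n
          = τ a * (∑ β, h a β * (∑ b, γ β b *
              ((1/2) * ((∑ σ, γ σ n * tgQu τ v h Γ pτ ph μ σ b)
                + (∑ σ, γ σ μ * tgQu τ v h Γ pτ ph n σ b)))))
            - (1/2) * (τ a * (∑ k, h a k * (∑ σ, γ μ σ *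
                (∑ b, γ n b * tgQu τ v h Γ pτ ph k σ b))))
            - ((1/2) * (tgQl τ v Γ pτ μ n + tgQl τ v Γ pτ n μ)) * (τ a * v a) := fun a => by
        simp only [tgL]
        rw [eT1 a, eT2 a]
        ring
      have z1 : (∑ a, τ a * (∑ β, h a β * (∑ b, γ β b *
          ((1/2) * ((∑ σ, γ σ n * tgQu τ v h Γ pτ ph μ σ b)
            + (∑ σ, γ σ μ * tgQu τ v h Γ pτ ph n σ b)))))) = 0 := by
        rw [← exch τ (fun m => ∑ b, γ m b *
          ((1/2) * ((∑ σ, γ σ n * tgQu τ v h Γ pτ ph μ σ b)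
            + (∑ σ, γ σ μ * tgQu τ v h Γ pτ ph n σ b)))) h]
        have z : ∀ m, (∑ a, τ a * h a m) * (∑ b, γ m b *
            ((1/2) * ((∑ σ, γ σ n * tgQu τ v h Γ pτ ph μ σ b)
              + (∑ σ, γ σ μ * tgQu τ v h Γ pτ ph n σ b)))) = 0 :=
          fun m => by rw [c1s m, zero_mul]
        rw [sum_ext z]; simp
      have z2 : (∑ a, τ a * (∑ k, h a k * (∑ σ, γ μ σ *
          (∑ b, γ n b * tgQu τ v h Γ pτ ph k σ b)))) = 0 := by
        rw [← exch τ (fun m => ∑ σ, γ μ σ *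
          (∑ b, γ n b * tgQu τ v h Γ pτ ph m σ b)) h]
        have z : ∀ m, (∑ a, τ a * h a m) * (∑ σ, γ μ σ *
            (∑ b, γ n b * tgQu τ v h Γ pτ ph m σ b)) = 0 :=
          fun m => by rw [c1s m, zero_mul]
        rw [sum_ext z]; simp
      rw [sum_ext eL2, Finset.sum_sub_distrib, Finset.sum_sub_distrib, ← Finset.mul_sum,
        ← Finset.mul_sum, z1, z2, hτv]
      ring
    have pK : (∑ a, τ a * (∑ b, (τ μ * tgkc v γ Γ pv n b + τ n * tgkc v γ Γ pv μ b) * h a b))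
        = 0 := by
      have e2 : ∀ a, τ a * (∑ b, (τ μ * tgkc v γ Γ pv n b + τ n * tgkc v γ Γ pv μ b) * h a b)
          = τ a * (∑ b, h a b * (τ μ * tgkc v γ Γ pv n b + τ n * tgkc v γ Γ pv μ b)) :=
        fun a => by rw [sum_ext (fun b => by ring :
          ∀ b, (τ μ * tgkc v γ Γ pv n b + τ n * tgkc v γ Γ pv μ b) * h a b
            = h a b * (τ μ * tgkc v γ Γ pv n b + τ n * tgkc v γ Γ pv μ b))]
      rw [sum_ext e2,
        ← exch τ (fun m => τ μ * tgkc v γ Γ pv n m + τ n * tgkc v γ Γ pv μ m) h]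
      have z : ∀ m, (∑ a, τ a * h a m) *
          (τ μ * tgkc v γ Γ pv n m + τ n * tgkc v γ Γ pv μ m) = 0 :=
        fun m => by rw [c1s m, zero_mul]
      rw [sum_ext z]; simp
    have e : ∀ a, τ a * tgX τ v γ h Γ pτ pv pγ ph a μ n
        = τ a * Γ a μ n - τ a * tgCc τ v h pτ pγ a μ n - τ a * tgL τ v γ h Γ pτ ph a μ n
          - (τ μ * tgA v pτ n + τ n * tgA v pτ μ) * (τ a * v a)
          - τ a * (∑ b, (τ μ * tgkc v γ Γ pv n b + τ n * tgkc v γ Γ pv μ b) * h a b) :=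
      fun a => by simp only [tgX]; ring
    rw [sum_ext e, Finset.sum_sub_distrib, Finset.sum_sub_distrib, Finset.sum_sub_distrib,
      Finset.sum_sub_distrib, ← Finset.mul_sum, pC, pL, pK, hτv]
    have q1 : tgQl τ v Γ pτ μ n = pτ μ n - (∑ σ, Γ σ μ n * τ σ) + 2 * τ μ * tgA v pτ n := rfl
    have q2 : tgQl τ v Γ pτ n μ = pτ n μ - (∑ σ, Γ σ n μ * τ σ) + 2 * τ n * tgA v pτ μ := rfl
    have g1 : (∑ σ, Γ σ μ n * τ σ) = ∑ a, τ a * Γ a μ n := sum_ext fun σ => by ring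
    have g2 : (∑ σ, Γ σ n μ * τ σ) = ∑ a, τ a * Γ a μ n :=
      sum_ext fun σ => by rw [hΓs σ n μ]; ring
    linear_combination ((1:ℝ)/2) * (q1 + q2 - g1 - g2)
  -- reconstruction
  have recon : ∀ α μ n, tgX τ v γ h Γ pτ pv pγ ph α μ n = 0 := by
    intro α μ n
    have e1 : ∀ m, kron α m * tgX τ v γ h Γ pτ pv pγ ph m μ n
        = (∑ σ, h α σ * γ σ m) * tgX τ v γ h Γ pτ pv pγ ph m μ n
          + v α * (τ m * tgX τ v γ h Γ pτ pv pγ ph m μ n) := fun m => by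
      rw [show kron α m = (∑ σ, h α σ * γ σ m) + v α * τ m from by rw [hhγ α m]; ring]
      ring
    have e2 := col2 (fun m => tgX τ v γ h Γ pτ pv pγ ph m μ n) α
    rw [← e2, sum_ext e1, Finset.sum_add_distrib, ← Finset.mul_sum,
      exch (fun σ => h α σ) (fun m => tgX τ v γ h Γ pτ pv pγ ph m μ n) γ, P1 μ n, mul_zero,
      add_zero]
    have z : ∀ σ, h α σ * (∑ m, γ σ m * tgX τ v γ h Γ pτ pv pγ ph m μ n) = 0 :=
      fun σ => by rw [P2 σ μ n, mul_zero]
    rw [sum_ext z]; simp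
  refine ⟨partI, partII, ?_⟩
  intro α μ n
  have h0 := recon α μ n
  simp only [tgX, tgA] at h0
  linarith [h0]



end Abstract
/-- Torsion-free Galilean case: reduced identities and distorsion decomposition. -/
theorem torsionfree_galilean_distorsion_decomposition
    (U : Set Vec4) (hU : IsOpen U) (hne : U.Nonempty)
    (τ v : Tens1) (γ h : Tens2) (Γ : Tens3)
    (hτs : Smooth1 τ U) (hvs : Smooth1 v U) (hγs : Smooth2 γ U) (hhs : Smooth2 h U)
    (hΓs : Smooth3 Γ U)
    (hdual : DualityOn τ v γ h U)
    (hsymΓ : ∀ x ∈ U, ∀ α μ ν, torsion Γ x α μ ν = 0)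
    (hωspatial : ∀ x ∈ U, ∀ μ ν, ∑ α, ∑ β, h x μ α * h x ν β * omega2 τ x α β = 0) :
    ∀ x ∈ U,
      (∀ μ ν, galRedQLow Γ τ v x μ ν = galRedQLow Γ τ v x ν μ) ∧
      (∀ α μ, (∑ ν, τ x ν * galRedQUp Γ τ v h x α μ ν)
          + (∑ ν, h x μ ν * galRedQLow Γ τ v x α ν) = 0) ∧
      (∀ α μ ν,
        Γ x α μ ν - compatConn v τ γ h x α μ ν
          = galDistorsion Γ τ v γ h x α μ ν
            + v x α * (τ x μ * (∑ σ, omega2 τ x ν σ * v x σ)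
                + τ x ν * (∑ σ, omega2 τ x μ σ * v x σ))
            + ∑ β, (τ x μ * coriolis Γ v γ x ν β
                + τ x ν * coriolis Γ v γ x μ β) * h x α β) := by
  intro x hx
  have hmem : U ∈ nhds x := hU.mem_nhds hx
  have dAt : ∀ (f : Vec4 → ℝ), ContDiffOn ℝ (⊤ : ℕ∞) f U → DifferentiableAt ℝ f x :=
    fun f hf => (hf.differentiableOn (by simp)).differentiableAt hmem
  have dτ : ∀ b, DifferentiableAt ℝ (fun y => τ y b) x := fun b => dAt _ (hτs b)
  have dv : ∀ b, DifferentiableAt ℝ (fun y => v y b) x := fun b => dAt _ (hvs b)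
  have dγ : ∀ a b, DifferentiableAt ℝ (fun y => γ y a b) x := fun a b => dAt _ (hγs a b)
  have dh : ∀ a b, DifferentiableAt ℝ (fun y => h y a b) x := fun a b => dAt _ (hhs a b)
  have Hγs : ∀ μ ν, γ x μ ν = γ x ν μ := (hdual x hx).1
  have Hhs : ∀ μ ν, h x μ ν = h x ν μ := (hdual x hx).2.1
  have Hτv : ∑ μ, τ x μ * v x μ = 1 := (hdual x hx).2.2.1
  have Hhτ : ∀ μ, ∑ ν, h x μ ν * τ x ν = 0 := (hdual x hx).2.2.2.1
  have Hγv : ∀ μ, ∑ ν, γ x μ ν * v x ν = 0 := (hdual x hx).2.2.2.2.1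
  have Hhγ : ∀ μ ν, ∑ σ, h x μ σ * γ x σ ν = kron μ ν - v x μ * τ x ν :=
    (hdual x hx).2.2.2.2.2
  have HΓs : ∀ α μ ν, Γ x α μ ν = Γ x α ν μ := fun α μ ν => by
    have := hsymΓ x hx α μ ν; unfold torsion at this; linarith
  have Hpγs : ∀ a μ ν, pd a (fun y => γ y μ ν) x = pd a (fun y => γ y ν μ) x :=
    fun a μ ν => pd_congr_on hU hx (fun y hy => (hdual y hy).1 μ ν) a
  have Hphs : ∀ a μ ν, pd a (fun y => h y μ ν) x = pd a (fun y => h y ν μ) x :=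
    fun a μ ν => pd_congr_on hU hx (fun y hy => (hdual y hy).2.1 μ ν) a
  have HD1 : ∀ a, ∑ b, (pd a (fun y => τ y b) x * v x b + τ x b * pd a (fun y => v y b) x)
      = 0 := by
    intro a
    have h0 : pd a (fun y => ∑ b, τ y b * v y b) x = pd a (fun _ => (1:ℝ)) x :=
      pd_congr_on hU hx (fun y hy => (hdual y hy).2.2.1) a
    rw [pd_const, pd_sum (fun b => (dτ b).fun_mul (dv b)) a] at h0
    rw [← h0]
    exact Finset.sum_congr rfl (fun b _ => (pd_mul (dτ b) (dv b) a).symm)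
  have HD2 : ∀ a μ, ∑ b, (pd a (fun y => h y μ b) x * τ x b
      + h x μ b * pd a (fun y => τ y b) x) = 0 := by
    intro a μ
    have h0 : pd a (fun y => ∑ b, h y μ b * τ y b) x = pd a (fun _ => (0:ℝ)) x :=
      pd_congr_on hU hx (fun y hy => (hdual y hy).2.2.2.1 μ) a
    rw [pd_const, pd_sum (fun b => (dh μ b).fun_mul (dτ b)) a] at h0
    rw [← h0]
    exact Finset.sum_congr rfl (fun b _ => (pd_mul (dh μ b) (dτ b) a).symm)
  have HD3 : ∀ a μ, ∑ b, (pd a (fun y => γ y μ b) x * v x b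
      + γ x μ b * pd a (fun y => v y b) x) = 0 := by
    intro a μ
    have h0 : pd a (fun y => ∑ b, γ y μ b * v y b) x = pd a (fun _ => (0:ℝ)) x :=
      pd_congr_on hU hx (fun y hy => (hdual y hy).2.2.2.2.1 μ) a
    rw [pd_const, pd_sum (fun b => (dγ μ b).fun_mul (dv b)) a] at h0
    rw [← h0]
    exact Finset.sum_congr rfl (fun b _ => (pd_mul (dγ μ b) (dv b) a).symm)
  have HD4 : ∀ a μ ν, ∑ b, (pd a (fun y => h y μ b) x * γ x b ν
      + h x μ b * pd a (fun y => γ y b ν) x)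
      = -(pd a (fun y => v y μ) x * τ x ν + v x μ * pd a (fun y => τ y ν) x) := by
    intro a μ ν
    have h0 : pd a (fun y => ∑ b, h y μ b * γ y b ν) x
        = pd a (fun y => kron μ ν - v y μ * τ y ν) x :=
      pd_congr_on hU hx (fun y hy => (hdual y hy).2.2.2.2.2 μ ν) a
    rw [pd_sum (fun b => (dh μ b).fun_mul (dγ b ν)) a] at h0
    rw [pd_sub (differentiableAt_const _) ((dv μ).fun_mul (dτ ν)), pd_const,
      pd_mul (dv μ) (dτ ν)] at h0
    rw [show (0:ℝ) - (pd a (fun y => v y μ) x * τ x ν + v x μ * pd a (fun y => τ y ν) x)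
        = -(pd a (fun y => v y μ) x * τ x ν + v x μ * pd a (fun y => τ y ν) x) by ring] at h0
    rw [← h0]
    exact Finset.sum_congr rfl (fun b _ => (pd_mul (dh μ b) (dγ b ν) a).symm)
  have Hω : ∀ μ ν, ∑ a, ∑ b, h x μ a * h x ν b
      * tgome (fun a b => pd a (fun y => τ y b) x) a b = 0 := fun μ ν => hωspatial x hx μ ν
  exact main_alg (τ x) (v x) (γ x) (h x) (Γ x)
    (fun a b => pd a (fun y => τ y b) x) (fun a b => pd a (fun y => v y b) x)
    (fun a b c => pd a (fun y => γ y b c) x) (fun a b c => pd a (fun y => h y b c) x)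
    Hγs Hhs Hτv Hhτ Hγv Hhγ HΓs Hω Hpγs Hphs HD1 HD2 HD3 HD4
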